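/- Let N, M, K be positive real numbers with K an integer, M ≥ N/K, and let t_0 = ⌊KM/N⌋. If t_0 ≥ 1, then K/(t_0 + 1) − t_0/(t_0 + 1) ≤ N/M − 1/2. -/
import Mathlib

theorem stmt_7 (N M : ℝ) (K : ℕ) (hN : 0 < N) (hM : 0 < M) (hK : 0 < K)
    (hMN : N / K ≤ M) (t₀ : ℤ) (ht₀ : t₀ = ⌊(K : ℝ) * M / N⌋) (h1 : 1 ≤ t₀) :
    (K : ℝ) / ((t₀ : ℝ) + 1) - (t₀ : ℝ) / ((t₀ : ℝ) + 1) ≤ N / M - 1 / 2 := by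
  have hK' : (0:ℝ) < K := by exact_mod_cast hK
  have hx : (0:ℝ) < K * M / N := by positivity
  have hxt : (K:ℝ) * M / N < (t₀:ℝ) + 1 := by
    rw [ht₀]; push_cast; exact Int.lt_floor_add_one _
  have h1' : (1:ℝ) ≤ (t₀:ℝ) := by exact_mod_cast h1
  have ht1 : (0:ℝ) < (t₀:ℝ) + 1 := by linarith
  have hNM : N / M = K / (K * M / N) := by
    field_simp
  rw [hNM]
  have h2 : (K:ℝ) / ((t₀:ℝ)+1) ≤ K / (K*M/N) :=
    div_le_div_of_nonneg_left hK'.le hx hxt.le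
  have h3 : (1:ℝ)/2 ≤ (t₀:ℝ)/((t₀:ℝ)+1) := by
    rw [div_le_div_iff₀ (by norm_num) ht1]; linarith
  linarith
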